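/- Define T : ℕ → ℕ → ℕ by T(0,0)=1, T(n,0)=1, T(n,n)=[n even], and T(n,k)=T(n−1,k)+T(n−1,k−1) for n>k>0 (T(n,k)=0 if k>n). Then for all n and all 0 ≤ k ≤ n, T(n,k) = sum over b from max(0, ⌈k − n/2⌉) to ⌊k/2⌋ of binom(n−k+b, k−b)·binom(k−b, b) (the sum being 0 if the lower limit exceeds the upper limit). -/

import Mathlib

def T : ℕ → ℕ → ℕ
  | _, 0 => 1
  | 0, _ + 1 => 0
  | n + 1, k + 1 =>
    if n + 1 < k + 1 then 0
    else if k + 1 = n + 1 then (if (n + 1) % 2 = 0 then 1 else 0)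
    else T n (k + 1) + T n k

/-!
`fenceSum a m` is the right-hand side at `n = a + m`, `k = m`, summed over all `b ≤ m` (the extra
terms vanish). It has the boundary values of `T` (`1` at `m = 0`, `[m even]` at `a = 0`), so it
suffices that `g = fenceSum` obeys Pascal's rule `g (a+1) (m+1) = g a (m+1) + g (a+1) m`. Pascal's
rule applied to both binomials of a summand, followed by an index shift, gives the three-term rule
`g (a+1) (m+2) = g a (m+2) + g a (m+1) + g (a+1) m`, from which the two-term rule follows by
induction on `m`.
-/

open Finset

lemma T_zero_right (n : ℕ) : T n 0 = 1 := by
  cases n <;> rfl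

lemma T_succ_self (n : ℕ) : T (n + 1) (n + 1) = if (n + 1) % 2 = 0 then 1 else 0 := by
  simp [T]

lemma T_succ_succ_of_lt {n k : ℕ} (h : k < n) : T (n + 1) (k + 1) = T n (k + 1) + T n k := by
  rw [T, if_neg (by omega), if_neg (by omega)]

def fenceSum (a m : ℕ) : ℕ :=
  ∑ b ∈ range (m + 1), (a + b).choose (m - b) * (m - b).choose b

lemma fenceSum_eq_sum_range (a : ℕ) {m N : ℕ} (h : m < N) :
    fenceSum a m = ∑ b ∈ range N, (a + b).choose (m - b) * (m - b).choose b := by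
  refine sum_subset (range_subset_range.2 h) fun b _ hb => ?_
  rw [Nat.choose_eq_zero_of_lt (by simp at hb; omega : m - b < b), mul_zero]

lemma fenceSum_zero_right (a : ℕ) : fenceSum a 0 = 1 := by
  simp [fenceSum]

lemma fenceSum_zero_left (m : ℕ) : fenceSum 0 m = if m % 2 = 0 then 1 else 0 := by
  unfold fenceSum
  rw [sum_eq_single (m / 2)]
  · rcases Nat.even_or_odd' m with ⟨c, rfl | rfl⟩
    · simp [show 2 * c - c = c by omega]
    · rw [Nat.choose_eq_zero_of_lt (by omega)]
      simp [Nat.add_mod]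
  · intro b _ hb
    rcases lt_or_gt_of_ne (show m - b ≠ b by omega) with h | h
    · rw [Nat.choose_eq_zero_of_lt h, mul_zero]
    · rw [Nat.choose_eq_zero_of_lt (by omega : 0 + b < m - b), zero_mul]
  · intro h
    exact absurd (mem_range.2 (by omega)) h

lemma fenceSum_succ_add_two (a m : ℕ) :
    fenceSum (a + 1) (m + 2) = fenceSum a (m + 2) + fenceSum a (m + 1) + fenceSum (a + 1) m := by
  have upper : ∀ b, (a + 1 + b).choose (m + 2 - b) * (m + 2 - b).choose b =
      (a + b).choose (m + 2 - b) * (m + 2 - b).choose b +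
        (a + b).choose (m + 1 - b) * (m + 2 - b).choose b := by
    intro b
    rcases le_or_gt b (m + 1) with hb | hb
    · rw [show m + 2 - b = m + 1 - b + 1 by omega, show a + 1 + b = a + b + 1 by omega,
        Nat.choose_succ_succ', add_mul, add_comm]
    · simp [show m + 2 - b = 0 by omega, Nat.choose_eq_zero_of_lt (show 0 < b by omega)]
  have lower : ∀ b, (a + (b + 1)).choose (m + 1 - (b + 1)) * (m + 2 - (b + 1)).choose (b + 1) =
      (a + (b + 1)).choose (m + 1 - (b + 1)) * (m + 1 - (b + 1)).choose (b + 1) +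
        (a + 1 + b).choose (m - b) * (m - b).choose b := by
    intro b
    rcases le_or_gt b m with hb | hb
    · rw [show m + 2 - (b + 1) = m - b + 1 by omega, show m + 1 - (b + 1) = m - b by omega,
        show a + 1 + b = a + (b + 1) by omega, Nat.choose_succ_succ' (m - b) b]
      ring
    · simp [show m + 1 - b = 0 by omega, show m - b = 0 by omega,
        Nat.choose_eq_zero_of_lt (show 0 < b by omega)]
  calc fenceSum (a + 1) (m + 2)
      = fenceSum a (m + 2) +
          ∑ b ∈ range (m + 3), (a + b).choose (m + 1 - b) * (m + 2 - b).choose b := by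
        rw [fenceSum, sum_congr rfl fun b _ => upper b, sum_add_distrib, fenceSum]
    _ = fenceSum a (m + 2) + fenceSum a (m + 1) + fenceSum (a + 1) m := by
        rw [sum_range_succ', sum_congr rfl fun b _ => lower b, sum_add_distrib,
          fenceSum_eq_sum_range (a + 1) (by omega : m < m + 2),
          fenceSum_eq_sum_range a (by omega : m + 1 < m + 3),
          sum_range_succ' fun b => (a + b).choose (m + 1 - b) * (m + 1 - b).choose b]
        simp only [add_zero, Nat.sub_zero, Nat.choose_zero_right]
        ring

lemma fenceSum_succ_succ (a m : ℕ) :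
    fenceSum (a + 1) (m + 1) = fenceSum a (m + 1) + fenceSum (a + 1) m := by
  induction m with
  | zero => simp [fenceSum, sum_range_succ]
  | succ m ih => linarith [fenceSum_succ_add_two a m]

lemma T_add_eq_fenceSum (a m : ℕ) : T (a + m) m = fenceSum a m := by
  induction m generalizing a with
  | zero => rw [T_zero_right, fenceSum_zero_right]
  | succ m ihm =>
    induction a with
    | zero => rw [zero_add, T_succ_self, fenceSum_zero_left]
    | succ a iha =>
      rw [show a + 1 + (m + 1) = a + m + 1 + 1 by omega, T_succ_succ_of_lt (by omega),
        fenceSum_succ_succ, ← iha, ← ihm]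
      ring_nf

theorem stmt17 (n k : ℕ) (hkn : k ≤ n) :
    T n k = ∑ b ∈ Finset.Icc (k - n / 2) (k / 2),
      Nat.choose (n - k + b) (k - b) * Nat.choose (k - b) b := by
  obtain ⟨a, rfl⟩ := Nat.exists_eq_add_of_le' hkn
  rw [T_add_eq_fenceSum, fenceSum, Nat.add_sub_cancel]
  refine (sum_subset ?_ ?_).symm
  · intro b hb
    simp only [mem_Icc, mem_range] at hb ⊢
    omega
  · intro b _ hb
    simp only [mem_Icc, not_and_or, not_le] at hb
    rcases hb with h | h
    · rw [Nat.choose_eq_zero_of_lt (by omega), zero_mul]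
    · rw [Nat.choose_eq_zero_of_lt (by omega : k - b < b), mul_zero]
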